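/- Let A : ℝ^d → ℝ^{d×d} with A(y) invertible for every y, let σ : ℝ^d → ℝ^{d×m}, let U : ℝ^d → ℝ and h : ℝ^d → ℝ be differentiable, and suppose that 𝒜_h(y) := (A(y)⁻¹)ᵀ·∇h(y) defines a differentiable map ℝ^d → ℝ^d. For ε ≠ 0 and η ∈ ℝ, define V(x,y) := ε²·(|x|² + 2U(y)) + η·ε·⟨x, 𝒜_h(y)⟩ + η·h(y) + 1 on ℝ^d × ℝ^d. Then for all (x,y) ∈ ℝ^d × ℝ^d, 𝓛_ε V(x,y) = −2⟨A(y)x, x⟩ + η·Σ_{i,j=1}^d x_i·x_j·∂_{y_j}(𝒜_h)_i(y) − η·⟨𝒜_h(y), ∇U(y)⟩ + 2·tr(σ(y)σ(y)ᵀ); in particular all singular terms of order ε^{−1} cancel exactly and the right-hand side does not depend on ε. -/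

import Mathlib

noncomputable section

open Matrix

/-- The `i`-th standard basis vector of `ℝ^d`. -/
def esingle {d : ℕ} (i : Fin d) : EuclideanSpace ℝ (Fin d) :=
  EuclideanSpace.single i 1

/-- The generator of the kinetic (Smoluchowski–Kramers) system:
`𝓛_ε f(x,y) = ε^{−2}[tr(σ(y)σ(y)ᵀ ∇ₓ²f) − ⟨A(y)x, ∇ₓf⟩]
  + ε^{−1}[⟨x, ∇_y f⟩ − ⟨∇U(y), ∇ₓf⟩]`. -/
def LKin {d m : ℕ}
    (A : EuclideanSpace ℝ (Fin d) → Matrix (Fin d) (Fin d) ℝ)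
    (σ : EuclideanSpace ℝ (Fin d) → Matrix (Fin d) (Fin m) ℝ)
    (U : EuclideanSpace ℝ (Fin d) → ℝ) (ε : ℝ)
    (f : EuclideanSpace ℝ (Fin d) → EuclideanSpace ℝ (Fin d) → ℝ)
    (x y : EuclideanSpace ℝ (Fin d)) : ℝ :=
  (ε ^ 2)⁻¹ *
      ((∑ i, ∑ j, (σ y * (σ y)ᵀ) i j *
          iteratedFDeriv ℝ 2 (fun x' => f x' y) x ![esingle j, esingle i])
        - ∑ i, (∑ j, A y i j * x j) * fderiv ℝ (fun x' => f x' y) x (esingle i))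
    + ε⁻¹ *
      ((∑ i, x i * fderiv ℝ (fun y' => f x y') y (esingle i))
        - ∑ i, fderiv ℝ U y (esingle i) * fderiv ℝ (fun x' => f x' y) x (esingle i))

/-- The Lyapunov function
`V(x,y) = ε²(|x|² + 2U(y)) + ηε⟨x, 𝒜(y)⟩ + ηh(y) + 1`. -/
def Vfun {d : ℕ} (U h : EuclideanSpace ℝ (Fin d) → ℝ)
    (𝒜 : EuclideanSpace ℝ (Fin d) → EuclideanSpace ℝ (Fin d)) (ε η : ℝ)
    (x y : EuclideanSpace ℝ (Fin d)) : ℝ :=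
  ε ^ 2 * (‖x‖ ^ 2 + 2 * U y) + η * ε * (∑ i, x i * 𝒜 y i) + η * h y + 1

/-!
In the fast variable the Lyapunov function is the quadratic `ε²‖x‖² + ηε⟪𝒜 y, x⟫ + const`,
so its `x`-gradient is `2ε²x + ηε𝒜(y)` and its `x`-Hessian is `2ε² I`, while its `y`-gradient is
`2ε²∇U + ηε (D𝒜)ᵀx + η∇h`. In `𝓛_ε V` the two terms of order `ε⁻¹` are `-η⟨A x, 𝒜⟩`, from the
friction, and `η⟨x, ∇h⟩`, from the transport in `y`; they cancel because `𝒜 = A⁻ᵀ∇h` gives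
`⟨A x, A⁻ᵀ∇h⟩ = ⟨x, ∇h⟩`. The terms `±2ε⟨x, ∇U⟩` from the transport and from the force cancel too.
-/

open scoped InnerProductSpace

theorem Matrix.mulVec_dotProduct_transpose_nonsing_inv_mulVec {n R : Type*} [Fintype n]
    [DecidableEq n] [CommRing R] {A : Matrix n n R} (hA : IsUnit A) (x g : n → R) :
    A *ᵥ x ⬝ᵥ (A⁻¹ᵀ *ᵥ g) = x ⬝ᵥ g := by
  rw [dotProduct_mulVec, vecMul_transpose, mulVec_mulVec,
    nonsing_inv_mul _ ((isUnit_iff_isUnit_det A).mp hA), one_mulVec]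

theorem Matrix.dotProduct_vecMul_self {n R : Type*} [Fintype n] [CommSemiring R] (v : n → R)
    (M : Matrix n n R) : v ⬝ᵥ (v ᵥ* M) = ∑ i, ∑ j, v i * v j * M i j := by
  simp only [dotProduct, vecMul, Finset.mul_sum]
  rw [Finset.sum_comm]
  exact Finset.sum_congr rfl fun i _ => Finset.sum_congr rfl fun j _ => by ring

section Quadratic

variable {E : Type*} [NormedAddCommGroup E] [InnerProductSpace ℝ E] (a : ℝ) (b : E) (c : ℝ)

theorem hasFDerivAt_quadratic (x : E) :
    HasFDerivAt (fun z => a * ‖z‖ ^ 2 + ⟪b, z⟫_ℝ + c) (innerSL ℝ ((2 * a) • x + b)) x := by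
  have := (((hasFDerivAt_id x).norm_sq.const_mul a).add ((innerSL ℝ b).hasFDerivAt)).add_const c
  refine this.congr_fderiv ?_
  ext v
  simp only [id_eq, ContinuousLinearMap.comp_id, _root_.add_apply,
    _root_.smul_apply, coe_innerSL_apply, nsmul_eq_mul, Nat.cast_ofNat, smul_eq_mul,
    map_add, map_smul, add_left_inj]
  ring

theorem fderiv_quadratic :
    fderiv ℝ (fun z => a * ‖z‖ ^ 2 + ⟪b, z⟫_ℝ + c) = fun x : E => innerSL ℝ ((2 * a) • x + b) :=
  funext fun x => (hasFDerivAt_quadratic a b c x).fderiv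

theorem iteratedFDeriv_two_quadratic (x v w : E) :
    iteratedFDeriv ℝ 2 (fun z => a * ‖z‖ ^ 2 + ⟪b, z⟫_ℝ + c) x ![v, w] = 2 * a * ⟪v, w⟫_ℝ := by
  have : HasFDerivAt (fun x : E => innerSL ℝ ((2 * a) • x + b))
      ((innerSL ℝ : E →L[ℝ] E →L[ℝ] ℝ).comp ((2 * a) • ContinuousLinearMap.id ℝ E)) x :=
    (innerSL ℝ).hasFDerivAt.comp x (((hasFDerivAt_id x).const_smul (2 * a)).add_const b)
  rw [iteratedFDeriv_two_apply, fderiv_quadratic, this.fderiv]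
  exact real_inner_smul_left v w (2 * a)

end Quadratic

section Coordinates

variable {d : ℕ}

def coordGrad (g : EuclideanSpace ℝ (Fin d) → ℝ) (x : EuclideanSpace ℝ (Fin d)) : Fin d → ℝ :=
  fun i => fderiv ℝ g x (esingle i)

def coordHessian (g : EuclideanSpace ℝ (Fin d) → ℝ) (x : EuclideanSpace ℝ (Fin d)) :
    Matrix (Fin d) (Fin d) ℝ :=
  fun i j => iteratedFDeriv ℝ 2 g x ![esingle i, esingle j]

def coordJacobian (F : EuclideanSpace ℝ (Fin d) → EuclideanSpace ℝ (Fin d))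
    (y : EuclideanSpace ℝ (Fin d)) : Matrix (Fin d) (Fin d) ℝ :=
  fun i j => fderiv ℝ (fun y' => F y' i) y (esingle j)

theorem LKin_eq_trace_dotProduct {m : ℕ}
    (A : EuclideanSpace ℝ (Fin d) → Matrix (Fin d) (Fin d) ℝ)
    (σ : EuclideanSpace ℝ (Fin d) → Matrix (Fin d) (Fin m) ℝ)
    (U : EuclideanSpace ℝ (Fin d) → ℝ) (ε : ℝ)
    (f : EuclideanSpace ℝ (Fin d) → EuclideanSpace ℝ (Fin d) → ℝ)
    (x y : EuclideanSpace ℝ (Fin d)) :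
    LKin A σ U ε f x y =
      (ε ^ 2)⁻¹ * (trace (σ y * (σ y)ᵀ * coordHessian (f · y) x)
          - A y *ᵥ x.ofLp ⬝ᵥ coordGrad (f · y) x)
        + ε⁻¹ * (x.ofLp ⬝ᵥ coordGrad (f x) y - coordGrad U y ⬝ᵥ coordGrad (f · y) x) :=
  rfl

end Coordinates

section Lyapunov

variable {d : ℕ} {U h : EuclideanSpace ℝ (Fin d) → ℝ}
  {𝒜 : EuclideanSpace ℝ (Fin d) → EuclideanSpace ℝ (Fin d)} (ε η : ℝ)
  (x y : EuclideanSpace ℝ (Fin d))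

theorem Vfun_fst_eq_quadratic :
    (Vfun U h 𝒜 ε η · y) =
      fun z => ε ^ 2 * ‖z‖ ^ 2 + ⟪(η * ε) • 𝒜 y, z⟫_ℝ + (ε ^ 2 * (2 * U y) + η * h y + 1) := by
  funext z
  rw [real_inner_smul_left]
  simp only [Vfun, PiLp.inner_apply, RCLike.inner_apply, conj_trivial]
  ring

theorem coordGrad_Vfun_fst :
    coordGrad (Vfun U h 𝒜 ε η · y) x = (2 * ε ^ 2) • x.ofLp + (η * ε) • (𝒜 y).ofLp := by
  ext i
  rw [coordGrad, Vfun_fst_eq_quadratic, fderiv_quadratic]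
  simp [esingle, EuclideanSpace.inner_single_right]

theorem coordHessian_Vfun_fst :
    coordHessian (Vfun U h 𝒜 ε η · y) x = (2 * ε ^ 2) • 1 := by
  ext i j
  rw [coordHessian, Vfun_fst_eq_quadratic, iteratedFDeriv_two_quadratic]
  simp [esingle, EuclideanSpace.inner_single_left, Matrix.one_apply]

theorem coordGrad_Vfun_snd (hU : DifferentiableAt ℝ U y) (hh : DifferentiableAt ℝ h y)
    (h𝒜 : DifferentiableAt ℝ 𝒜 y) :
    coordGrad (Vfun U h 𝒜 ε η x) y =
      (2 * ε ^ 2) • coordGrad U y + (η * ε) • (x.ofLp ᵥ* coordJacobian 𝒜 y)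
        + η • coordGrad h y := by
  have h𝒜x : HasFDerivAt (fun y' => ∑ k, x k * 𝒜 y' k)
      (∑ k, x k • fderiv ℝ (fun y' => 𝒜 y' k) y) y :=
    HasFDerivAt.fun_sum fun k _ =>
      (((differentiableAt_piLp 2).mp h𝒜 k).hasFDerivAt).const_mul (x k)
  have hV : HasFDerivAt (Vfun U h 𝒜 ε η x) _ y :=
    ((((hU.hasFDerivAt.const_mul 2).const_add (‖x‖ ^ 2)).const_mul (ε ^ 2)).add
      (h𝒜x.const_mul (η * ε))).add (hh.hasFDerivAt.const_mul η) |>.add_const 1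
  ext i
  simp only [coordGrad, Pi.add_apply, Pi.smul_apply, hV.fderiv]
  simp only [_root_.add_apply, _root_.smul_apply, smul_eq_mul,
    _root_.sum_apply, Finset.mul_sum, vecMul, dotProduct, coordJacobian, add_left_inj]
  ring

end Lyapunov

/-- Exact computation of `𝓛_ε V`: all singular terms of order `ε^{−1}` cancel and the
result does not depend on `ε`. -/
theorem LKin_V_identity {d m : ℕ}
    (A : EuclideanSpace ℝ (Fin d) → Matrix (Fin d) (Fin d) ℝ)
    (hAinv : ∀ y, IsUnit (A y))
    (σ : EuclideanSpace ℝ (Fin d) → Matrix (Fin d) (Fin m) ℝ)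
    (U h : EuclideanSpace ℝ (Fin d) → ℝ)
    (hU : Differentiable ℝ U) (hh : Differentiable ℝ h)
    (𝒜 : EuclideanSpace ℝ (Fin d) → EuclideanSpace ℝ (Fin d))
    (h𝒜def : ∀ y i, 𝒜 y i = ∑ j, (A y)⁻¹ j i * fderiv ℝ h y (esingle j))
    (h𝒜diff : Differentiable ℝ 𝒜)
    (ε : ℝ) (hε : ε ≠ 0) (η : ℝ) :
    ∀ x y : EuclideanSpace ℝ (Fin d),
      LKin A σ U ε (Vfun U h 𝒜 ε η) x y
        = -2 * (∑ i, (∑ j, A y i j * x j) * x i)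
          + η * (∑ i, ∑ j, x i * x j * fderiv ℝ (fun y' => 𝒜 y' i) y (esingle j))
          - η * (∑ i, 𝒜 y i * fderiv ℝ U y (esingle i))
          + 2 * (∑ i, (σ y * (σ y)ᵀ) i i) := by
  intro x y
  have h𝒜y : (𝒜 y).ofLp = (A y)⁻¹ᵀ *ᵥ coordGrad h y := funext (h𝒜def y)
  have hcancel : A y *ᵥ x.ofLp ⬝ᵥ (𝒜 y).ofLp = x.ofLp ⬝ᵥ coordGrad h y := by
    rw [h𝒜y, mulVec_dotProduct_transpose_nonsing_inv_mulVec (hAinv y)]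
  change _ = -2 * (A y *ᵥ x.ofLp ⬝ᵥ x.ofLp) + η * ∑ i, ∑ j, x i * x j * coordJacobian 𝒜 y i j
    - η * ((𝒜 y).ofLp ⬝ᵥ coordGrad U y) + 2 * trace (σ y * (σ y)ᵀ)
  rw [← dotProduct_vecMul_self, LKin_eq_trace_dotProduct, coordGrad_Vfun_fst,
    coordHessian_Vfun_fst,
    coordGrad_Vfun_snd ε η x y (hU y) (hh y) (h𝒜diff y)]
  simp only [dotProduct_add, add_dotProduct, dotProduct_smul, smul_dotProduct, smul_eq_mul,
    Matrix.mul_smul, Matrix.mul_one, trace_smul, hcancel, dotProduct_comm (coordGrad U y)]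
  field_simp
  ring
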